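/- Let σ > 0, r ≥ 0, T > 0, and let V₁ be a classical solution of the Heston pricing equation (vS²/2)V_SS + σvS·V_Sv + (vσ²/2)V_vv + rS·V_S + σ²·V_v − rV + V_t = 0 on S > 0, v > 0, 0 ≤ t < T such that V₁(S,v,t) → Φ(S,v) as t → T⁻ for every S, v > 0. Then V₂(S,v,t) := V₁(S,v,t) + (1/v)·exp(−r(T−t) − 2v/(σ²(T−t))) is also a classical solution of the same equation on the same domain, V₂(S,v,t) → Φ(S,v) as t → T⁻ for every S, v > 0, and V₂ ≠ V₁. Hence the terminal value problem for this equation has more than one classical solution. -/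

import Mathlib

open Real Filter Topology

lemma hasDerivAt_W (c d : ℝ) (hd : d ≠ 0) (v : ℝ) (hv : v ≠ 0) :
    HasDerivAt (fun v' : ℝ => (1 / v') * Real.exp (c - 2 * v' / d))
      ((-(1 / v ^ 2) - 2 / (d * v)) * Real.exp (c - 2 * v / d)) v := by
  have h1 : HasDerivAt (fun v' : ℝ => 1 / v') (-(1 / v ^ 2)) v := by
    simpa [one_div] using hasDerivAt_inv hv
  have h2 : HasDerivAt (fun v' : ℝ => c - 2 * v' / d) (0 - 2 * 1 / d) v :=
    (hasDerivAt_const v c).sub (((hasDerivAt_id v).const_mul 2).div_const d)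
  have h := h1.mul h2.exp
  convert h using 1
  all_goals try rfl
  field_simp
  ring

lemma hasDerivAt_Wv (c d : ℝ) (hd : d ≠ 0) (v : ℝ) (hv : v ≠ 0) :
    HasDerivAt (fun v' : ℝ => (-(1 / v' ^ 2) - 2 / (d * v')) * Real.exp (c - 2 * v' / d))
      ((2 / v ^ 3 + 4 / (d * v ^ 2) + 4 / (d ^ 2 * v)) * Real.exp (c - 2 * v / d)) v := by
  have h1 : HasDerivAt (fun v' : ℝ => 1 / v' ^ 2) (-(2 * v) / (v ^ 2) ^ 2) v := by
    simpa [one_div] using (hasDerivAt_pow 2 v).fun_inv (pow_ne_zero 2 hv)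
  have h2 : HasDerivAt (fun v' : ℝ => 2 / (d * v'))
      ((0 * (d * v) - 2 * (d * 1)) / (d * v) ^ 2) v :=
    (hasDerivAt_const v 2).div ((hasDerivAt_id v).const_mul d) (mul_ne_zero hd hv)
  have h3 : HasDerivAt (fun v' : ℝ => c - 2 * v' / d) (0 - 2 * 1 / d) v :=
    (hasDerivAt_const v c).sub (((hasDerivAt_id v).const_mul 2).div_const d)
  have h := (h1.neg.sub h2).mul h3.exp
  convert h using 1
  all_goals try rfl
  simp only [Pi.sub_apply, Pi.neg_apply]
  field_simp
  ring

lemma hasDerivAt_Wt (r T v : ℝ) (σ : ℝ) (hσ : σ ≠ 0) (t : ℝ) (hτ : T - t ≠ 0) :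
    HasDerivAt (fun t' : ℝ => (1 / v) * Real.exp (-(r * (T - t')) - 2 * v / (σ ^ 2 * (T - t'))))
      ((1 / v) * (r - 2 * v / (σ ^ 2 * (T - t) * (T - t))) *
        Real.exp (-(r * (T - t)) - 2 * v / (σ ^ 2 * (T - t)))) t := by
  have hsub : HasDerivAt (fun t' : ℝ => T - t') (0 - 1) t :=
    (hasDerivAt_const t T).sub (hasDerivAt_id t)
  have hden : σ ^ 2 * (T - t) ≠ 0 := mul_ne_zero (pow_ne_zero 2 hσ) hτ
  have h1 : HasDerivAt (fun t' : ℝ => -(r * (T - t'))) (-(r * (0 - 1))) t :=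
    (hsub.const_mul r).neg
  have h2 : HasDerivAt (fun t' : ℝ => 2 * v / (σ ^ 2 * (T - t')))
      ((0 * (σ ^ 2 * (T - t)) - 2 * v * (σ ^ 2 * (0 - 1))) / (σ ^ 2 * (T - t)) ^ 2) t :=
    (hasDerivAt_const t (2 * v)).div (hsub.const_mul (σ ^ 2)) hden
  have h := ((h1.sub h2).exp).const_mul (1 / v)
  convert h using 1
  all_goals try rfl
  simp only [Pi.sub_apply]
  rcases eq_or_ne v 0 with hv | hv
  · simp [hv]
  · field_simp
    ring

/-- `V` is a classical solution of the Heston pricing equation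
`(vS²/2)V_SS + σvS·V_Sv + (vσ²/2)V_vv + rS·V_S + σ²·V_v − rV + V_t = 0`
on `S > 0`, `v > 0`, `0 ≤ t < T`. -/
def IsHestonSolution (σ r T : ℝ) (V : ℝ → ℝ → ℝ → ℝ) : Prop :=
  ∀ S v t : ℝ, 0 < S → 0 < v → 0 ≤ t → t < T →
    ∃ pS pSS pSv pv pvv pt : ℝ,
      HasDerivAt (fun S' => V S' v t) pS S ∧
      HasDerivAt (deriv fun S' => V S' v t) pSS S ∧
      HasDerivAt (fun v' => deriv (fun S' => V S' v' t) S) pSv v ∧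
      HasDerivAt (fun v' => V S v' t) pv v ∧
      HasDerivAt (deriv fun v' => V S v' t) pvv v ∧
      HasDerivAt (fun t' => V S v t') pt t ∧
      v * S ^ 2 / 2 * pSS + σ * v * S * pSv + v * σ ^ 2 / 2 * pvv +
        r * S * pS + σ ^ 2 * pv - r * V S v t + pt = 0

/-- non-uniqueness in the terminal value problem for the Heston
pricing equation: if `V₁` is a classical solution attaining the terminal data
`Φ`, then `V₂ = V₁ + (1/v)·exp(−r(T−t) − 2v/(σ²(T−t)))` is another classical
solution attaining the same terminal data, and `V₂ ≠ V₁`. -/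
theorem heston_terminal_value_nonuniqueness (σ r T : ℝ) (hσ : 0 < σ)
    (hr : 0 ≤ r) (hT : 0 < T) (Φ : ℝ → ℝ → ℝ) (V₁ : ℝ → ℝ → ℝ → ℝ)
    (hV₁ : IsHestonSolution σ r T V₁)
    (hterm : ∀ S v : ℝ, 0 < S → 0 < v →
      Tendsto (fun t => V₁ S v t) (𝓝[<] T) (𝓝 (Φ S v))) :
    IsHestonSolution σ r T
      (fun S v t => V₁ S v t +
        (1 / v) * Real.exp (-(r * (T - t)) - 2 * v / (σ ^ 2 * (T - t)))) ∧
    (∀ S v : ℝ, 0 < S → 0 < v →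
      Tendsto (fun t => V₁ S v t +
          (1 / v) * Real.exp (-(r * (T - t)) - 2 * v / (σ ^ 2 * (T - t))))
        (𝓝[<] T) (𝓝 (Φ S v))) ∧
    (∃ S v t : ℝ, 0 < S ∧ 0 < v ∧ 0 ≤ t ∧ t < T ∧
      V₁ S v t +
          (1 / v) * Real.exp (-(r * (T - t)) - 2 * v / (σ ^ 2 * (T - t))) ≠
        V₁ S v t) := by
  refine ⟨?_, ?_, ?_⟩
  · intro S v t hS hv ht₀ ht
    obtain ⟨pS, pSS, pSv, pv, pvv, pt, hpS, hpSS, hpSv, hpv, hpvv, hpt, heq⟩ :=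
      hV₁ S v t hS hv ht₀ ht
    have hτ : (0:ℝ) < T - t := sub_pos.mpr ht
    have hd : σ ^ 2 * (T - t) ≠ 0 := mul_ne_zero (pow_ne_zero 2 hσ.ne') hτ.ne'
    refine ⟨pS, pSS, pSv,
      pv + (-(1 / v ^ 2) - 2 / (σ ^ 2 * (T - t) * v)) *
        Real.exp (-(r * (T - t)) - 2 * v / (σ ^ 2 * (T - t))),
      pvv + (2 / v ^ 3 + 4 / (σ ^ 2 * (T - t) * v ^ 2)
          + 4 / ((σ ^ 2 * (T - t)) ^ 2 * v)) *
        Real.exp (-(r * (T - t)) - 2 * v / (σ ^ 2 * (T - t))),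
      pt + (1 / v) * (r - 2 * v / (σ ^ 2 * (T - t) * (T - t))) *
        Real.exp (-(r * (T - t)) - 2 * v / (σ ^ 2 * (T - t))),
      ?_, ?_, ?_, ?_, ?_, ?_, ?_⟩
    · exact hpS.add_const _
    · have h : (deriv fun S' => V₁ S' v t +
          (1 / v) * Real.exp (-(r * (T - t)) - 2 * v / (σ ^ 2 * (T - t))))
          = deriv (fun S' => V₁ S' v t) := funext fun x => deriv_add_const _
      rw [h]; exact hpSS
    · have h : (fun v' => deriv (fun S' => V₁ S' v' t +
          (1 / v') * Real.exp (-(r * (T - t)) - 2 * v' / (σ ^ 2 * (T - t)))) S)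
          = fun v' => deriv (fun S' => V₁ S' v' t) S :=
        funext fun v' => deriv_add_const _
      rw [h]; exact hpSv
    · exact hpv.add (hasDerivAt_W (-(r * (T - t))) (σ ^ 2 * (T - t)) hd v hv.ne')
    · have hev : (deriv fun v' => V₁ S v' t +
          (1 / v') * Real.exp (-(r * (T - t)) - 2 * v' / (σ ^ 2 * (T - t))))
          =ᶠ[𝓝 v] fun v' => deriv (fun x => V₁ S x t) v' +
            (-(1 / v' ^ 2) - 2 / (σ ^ 2 * (T - t) * v')) *
              Real.exp (-(r * (T - t)) - 2 * v' / (σ ^ 2 * (T - t))) := by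
        filter_upwards [Ioi_mem_nhds hv] with v' hv'
        obtain ⟨_, _, _, pv', _, _, _, _, _, hpv', _, _, _⟩ :=
          hV₁ S v' t hS hv' ht₀ ht
        have hw := hasDerivAt_W (-(r * (T - t))) (σ ^ 2 * (T - t)) hd v' (ne_of_gt hv')
        rw [hpv'.deriv]; exact (hpv'.add hw).deriv
      exact (hpvv.add (hasDerivAt_Wv (-(r * (T - t))) (σ ^ 2 * (T - t)) hd v
        hv.ne')).congr_of_eventuallyEq hev
    · exact hpt.add (hasDerivAt_Wt r T v σ hσ.ne' t hτ.ne')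
    · have key : v * σ ^ 2 / 2 *
          ((2 / v ^ 3 + 4 / (σ ^ 2 * (T - t) * v ^ 2)
            + 4 / ((σ ^ 2 * (T - t)) ^ 2 * v)) *
            Real.exp (-(r * (T - t)) - 2 * v / (σ ^ 2 * (T - t))))
          + σ ^ 2 * ((-(1 / v ^ 2) - 2 / (σ ^ 2 * (T - t) * v)) *
            Real.exp (-(r * (T - t)) - 2 * v / (σ ^ 2 * (T - t))))
          - r * ((1 / v) * Real.exp (-(r * (T - t)) - 2 * v / (σ ^ 2 * (T - t))))
          + (1 / v) * (r - 2 * v / (σ ^ 2 * (T - t) * (T - t))) *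
            Real.exp (-(r * (T - t)) - 2 * v / (σ ^ 2 * (T - t))) = 0 := by
        field_simp
        ring
      linear_combination heq + key
  · intro S v hS hv
    have h1 : Tendsto (fun t : ℝ => T - t) (𝓝[<] T) (𝓝[>] 0) := by
      apply tendsto_nhdsWithin_of_tendsto_nhds_of_eventually_within
      · have : Tendsto (fun t : ℝ => T - t) (𝓝 T) (𝓝 (T - T)) :=
          (continuous_const.sub continuous_id).tendsto T
        simpa using this.mono_left nhdsWithin_le_nhds
      · filter_upwards [self_mem_nhdsWithin] with t ht
        exact sub_pos.mpr (Set.mem_Iio.mp ht)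
    have h2 : Tendsto (fun t : ℝ => 2 * v / (σ ^ 2 * (T - t))) (𝓝[<] T) atTop := by
      have hinv : Tendsto (fun t : ℝ => (T - t)⁻¹) (𝓝[<] T) atTop :=
        tendsto_inv_nhdsGT_zero.comp h1
      have hc : (0:ℝ) < 2 * v / σ ^ 2 := by positivity
      have := hinv.const_mul_atTop hc
      exact this.congr fun t =>
        (div_eq_mul_inv _ _).symm.trans (div_div _ _ _)
    have h3 : Tendsto (fun t : ℝ => -(r * (T - t)) - 2 * v / (σ ^ 2 * (T - t)))
        (𝓝[<] T) atBot := by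
      have hA : Tendsto (fun t : ℝ => -(r * (T - t))) (𝓝[<] T) (𝓝 0) := by
        have : Tendsto (fun t : ℝ => -(r * (T - t))) (𝓝 T) (𝓝 (-(r * (T - T)))) :=
          ((continuous_const.mul (continuous_const.sub continuous_id)).neg).tendsto T
        simpa using this.mono_left nhdsWithin_le_nhds
      simpa [sub_eq_add_neg] using hA.add_atBot (tendsto_neg_atTop_atBot.comp h2)
    have h4 : Tendsto (fun t : ℝ =>
        (1 / v) * Real.exp (-(r * (T - t)) - 2 * v / (σ ^ 2 * (T - t))))
        (𝓝[<] T) (𝓝 0) := by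
      have := (Real.tendsto_exp_atBot.comp h3).const_mul (1 / v)
      simpa using this
    simpa using (hterm S v hS hv).add h4
  · refine ⟨1, 1, 0, one_pos, one_pos, le_refl 0, hT, ?_⟩
    have hpos : (0:ℝ) < (1 / (1:ℝ)) *
        Real.exp (-(r * (T - 0)) - 2 * 1 / (σ ^ 2 * (T - 0))) := by positivity
    intro h
    nlinarith [hpos]
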